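/- Let S be a convex subset of a real vector space with icr S ≠ ∅, φ : S → ℝ convex, and C ⊆ S a convex set symmetric with respect to a point p ∈ C such that φ|_C is bounded above. Let μ be the Minkowski functional of C − p. Then φ is locally μ-Lipschitz on icr S: for every x ∈ icr S there exist ε > 0 and L > 0 such that ε(C − p) + x ⊆ S and |φ(u) − φ(v)| ≤ L·μ(u − v) for all u, v ∈ ε(C − p) + x. -/

import Mathlib

open Pointwise

variable {X : Type*} [AddCommGroup X] [Module ℝ X]

/-- The relative algebraic interior of a set `S`. -/
def icr (S : Set X) : Set X :=
  {x | x ∈ S ∧ ∀ y ∈ Submodule.span ℝ (S - S), ∃ t : ℝ, 0 < t ∧ x + t • y ∈ S}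

/-!
Write `D = C - {p}`. As `x ∈ icr S`, `x` lies strictly inside a segment `[q, p]` of `S`, so the
homothety with centre `q` and ratio `b` maps `C` onto `b • D + {x} ⊆ S`, where convexity bounds `φ`
above by some `M`. Because `x` is the midpoint of `x + b • d` and `x - b • d`, symmetry of `D` turns
this into the lower bound `2 φ x - M`. Finally, if `u, v ∈ (b / 2) • D + {x}` and `u - v ∈ s • D`,
prolonging the segment `[v, u]` beyond `u` by `(b / 2) / s` times its length stays in `b • D + {x}`,
and comparing slopes of `φ` along this line gives `φ u - φ v ≤ 4 (M - φ x) / b * s`; taking the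
infimum over `s` gives the gauge.
-/

theorem exists_mem_openSegment_of_mem_icr {S : Set X} {x p : X} (hx : x ∈ icr S)
    (hp : p ∈ S) : ∃ q ∈ S, x ∈ openSegment ℝ q p := by
  obtain ⟨t, ht, hq⟩ := hx.2 (x - p) (Submodule.subset_span ⟨x, hx.1, p, hp, rfl⟩)
  refine ⟨_, hq, 1 / (1 + t), t / (1 + t), by positivity, by positivity, by field_simp, ?_⟩
  match_scalars
  field_simp
  ring

theorem mem_smul_add_singleton {D : Set X} {r : ℝ} {x y : X} :
    y ∈ r • D + {x} ↔ ∃ d ∈ D, x + r • d = y := by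
  constructor
  · rintro ⟨_, ⟨d, hd, rfl⟩, _, rfl, rfl⟩
    exact ⟨d, hd, add_comm _ _⟩
  · rintro ⟨d, hd, rfl⟩
    exact ⟨r • d, ⟨d, hd, rfl⟩, x, rfl, add_comm _ _⟩

theorem Convex.half_smul_add_singleton_subset {D : Set X} (hD : Convex ℝ D) (h0 : (0 : X) ∈ D)
    (r : ℝ) (x : X) : (r / 2) • D + {x} ⊆ r • D + {x} := by
  intro y hy
  obtain ⟨d, hd, rfl⟩ := mem_smul_add_singleton.1 hy
  refine mem_smul_add_singleton.2
    ⟨(1 / 2 : ℝ) • d, hD.smul_mem_of_zero_mem h0 hd ⟨by norm_num, by norm_num⟩, by module⟩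

-- Nonemptiness matters: `gauge D w = 0` when no positive multiple of `D` contains `w`.
theorem le_mul_gauge_of_forall_mem_smul {D : Set X} {w : X} {c K : ℝ} (hK : 0 ≤ K)
    (hw : ∃ s : ℝ, 0 < s ∧ w ∈ s • D) (h : ∀ s > 0, w ∈ s • D → c ≤ K * s) :
    c ≤ K * gauge D w := by
  obtain ⟨s₀, hs₀, hws₀⟩ := hw
  rw [gauge_def, ← smul_eq_mul, ← Real.sInf_smul_of_nonneg hK]
  refine le_csInf (Set.Nonempty.smul_set ⟨s₀, hs₀, hws₀⟩) ?_
  rintro _ ⟨s, ⟨hs, hws⟩, rfl⟩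
  exact h s hs hws

namespace ConvexOn

variable {S : Set X} {f : X → ℝ}

theorem mul_sub_le_mul_sub (hf : ConvexOn ℝ S f) {x y : X} {r s : ℝ} (hr : 0 < r) (hs : 0 < s)
    (hy : y ∈ S) (hz : x + (r / s) • (x - y) ∈ S) :
    r * (f x - f y) ≤ s * (f (x + (r / s) • (x - y)) - f x) := by
  have hxyz : (r / (r + s)) • y + (s / (r + s)) • (x + (r / s) • (x - y)) = x := by
    match_scalars <;> field_simp <;> ring
  have h := hf.2 hy hz (show 0 ≤ r / (r + s) by positivity) (show 0 ≤ s / (r + s) by positivity)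
    (by field_simp)
  rw [hxyz, smul_eq_mul, smul_eq_mul] at h
  field_simp at h
  linear_combination h

theorem two_mul_le_add_add_sub (hf : ConvexOn ℝ S f) {x d : X} (h₁ : x + d ∈ S)
    (h₂ : x - d ∈ S) : 2 * f x ≤ f (x + d) + f (x - d) := by
  have h := hf.2 h₁ h₂ (by norm_num : (0 : ℝ) ≤ 1 / 2) (by norm_num : (0 : ℝ) ≤ 1 / 2)
    (by norm_num)
  have hx : (1 / 2 : ℝ) • (x + d) + (1 / 2 : ℝ) • (x - d) = x := by module
  rw [hx, smul_eq_mul, smul_eq_mul] at h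
  linarith

variable {D : Set X} {x : X} {r M : ℝ}

theorem two_mul_sub_le (hf : ConvexOn ℝ S f) (hDneg : ∀ d ∈ D, -d ∈ D)
    (hDS : r • D + {x} ⊆ S) (hM : ∀ y ∈ r • D + {x}, f y ≤ M) {y : X}
    (hy : y ∈ r • D + {x}) : 2 * f x - M ≤ f y := by
  obtain ⟨d, hd, rfl⟩ := mem_smul_add_singleton.1 hy
  have hrefl : x - r • d ∈ r • D + {x} :=
    mem_smul_add_singleton.2 ⟨-d, hDneg d hd, by rw [smul_neg, sub_eq_add_neg]⟩
  have := hf.two_mul_le_add_add_sub (hDS hy) (hDS hrefl)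
  linarith [hM _ hrefl]

theorem sub_le_mul_of_sub_mem_smul (hf : ConvexOn ℝ S f) (hD : Convex ℝ D)
    (hDneg : ∀ d ∈ D, -d ∈ D) (h0 : (0 : X) ∈ D) (hr : 0 < r) (hDS : r • D + {x} ⊆ S)
    (hM : ∀ y ∈ r • D + {x}, f y ≤ M) {u v : X} (hu : u ∈ (r / 2) • D + {x})
    (hv : v ∈ (r / 2) • D + {x}) {s : ℝ} (hs : 0 < s) (huv : u - v ∈ s • D) :
    f u - f v ≤ 4 * (M - f x) / r * s := by
  have hu' := hD.half_smul_add_singleton_subset h0 r x hu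
  have hv' := hD.half_smul_add_singleton_subset h0 r x hv
  obtain ⟨d₁, hd₁, rfl⟩ := mem_smul_add_singleton.1 hu
  obtain ⟨d, hd, hsd⟩ := huv
  set z := x + (r / 2) • d₁ + (r / 2 / s) • (x + (r / 2) • d₁ - v)
  have hz : z ∈ r • D + {x} := by
    refine mem_smul_add_singleton.2 ⟨(1 / 2 : ℝ) • d₁ + (1 / 2 : ℝ) • d,
      hD hd₁ hd (by norm_num) (by norm_num) (by norm_num), ?_⟩
    simp only [z, ← hsd]
    match_scalars <;> field_simp
  have hslope := hf.mul_sub_le_mul_sub (half_pos hr) hs (hDS hv') (hDS hz)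
  have hzu : f z - f (x + (r / 2) • d₁) ≤ 2 * (M - f x) := by
    linarith [hM z hz, two_mul_sub_le hf hDneg hDS hM hu']
  rw [div_mul_eq_mul_div, le_div_iff₀ hr]
  linarith [mul_le_mul_of_nonneg_left hzu hs.le]

theorem abs_sub_le_mul_gauge (hf : ConvexOn ℝ S f) (hD : Convex ℝ D)
    (hDneg : ∀ d ∈ D, -d ∈ D) (hr : 0 < r) (hDS : r • D + {x} ⊆ S)
    (hM : ∀ y ∈ r • D + {x}, f y ≤ M) {u v : X} (hu : u ∈ (r / 2) • D + {x})
    (hv : v ∈ (r / 2) • D + {x}) :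
    |f u - f v| ≤ 4 * (M - f x) / r * gauge D (u - v) := by
  obtain ⟨d₁, hd₁, rfl⟩ := mem_smul_add_singleton.1 hu
  obtain ⟨d₂, hd₂, rfl⟩ := mem_smul_add_singleton.1 hv
  have h0 : (0 : X) ∈ D := by
    simpa using hD hd₁ (hDneg d₁ hd₁) (by norm_num : (0 : ℝ) ≤ 1 / 2)
      (by norm_num : (0 : ℝ) ≤ 1 / 2) (by norm_num)
  have hK : 0 ≤ 4 * (M - f x) / r := by
    have := hM x (mem_smul_add_singleton.2 ⟨0, h0, by simp⟩)
    exact div_nonneg (by linarith) hr.le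
  have hsub : x + (r / 2) • d₁ - (x + (r / 2) • d₂) ∈ r • D :=
    ⟨(1 / 2 : ℝ) • d₁ + (1 / 2 : ℝ) • -d₂,
      hD hd₁ (hDneg d₂ hd₂) (by norm_num) (by norm_num) (by norm_num), by module⟩
  have hneg {w : X} {s : ℝ} (hw : w ∈ s • D) : -w ∈ s • D := by
    obtain ⟨d, hd, rfl⟩ := hw
    exact ⟨-d, hDneg d hd, smul_neg s d⟩
  rw [abs_sub_le_iff]
  constructor
  · exact le_mul_gauge_of_forall_mem_smul hK ⟨r, hr, hsub⟩
      fun s hs h ↦ hf.sub_le_mul_of_sub_mem_smul hD hDneg h0 hr hDS hM hu hv hs h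
  · rw [← gauge_neg hDneg, neg_sub]
    exact le_mul_gauge_of_forall_mem_smul hK ⟨r, hr, by simpa using hneg hsub⟩
      fun s hs h ↦ hf.sub_le_mul_of_sub_mem_smul hD hDneg h0 hr hDS hM hv hu hs h

end ConvexOn

theorem stmt_6_general (S : Set X) (φ : X → ℝ) (hφ : ConvexOn ℝ S φ)
    (C : Set X) (hCS : C ⊆ S) (hC : Convex ℝ C) (p : X) (hp : p ∈ C)
    (hsym : C - {p} = -(C - {p}))
    (hbdd : ∃ M : ℝ, ∀ x ∈ C, φ x ≤ M) :
    ∀ x ∈ icr S, ∃ ε : ℝ, 0 < ε ∧ ∃ L : ℝ, 0 < L ∧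
      ε • (C - {p}) + {x} ⊆ S ∧
      ∀ u ∈ ε • (C - {p}) + {x}, ∀ v ∈ ε • (C - {p}) + {x},
        |φ u - φ v| ≤ L * gauge (C - {p}) (u - v) := by
  intro x hx
  obtain ⟨M, hM⟩ := hbdd
  obtain ⟨q, hq, a, b, ha, hb, hab, hqp⟩ := exists_mem_openSegment_of_mem_icr hx (hCS hp)
  have hD : Convex ℝ (C - {p}) := hC.sub (convex_singleton p)
  have hDneg : ∀ d ∈ C - {p}, -d ∈ C - {p} := fun d hd ↦ by
    rw [hsym] at hd
    exact hd
  have hhomothety : ∀ y ∈ b • (C - {p}) + {x}, ∃ c ∈ C, y = a • q + b • c := by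
    intro y hy
    obtain ⟨_, ⟨c, hc, _, rfl, rfl⟩, rfl⟩ := mem_smul_add_singleton.1 hy
    refine ⟨c, hc, ?_⟩
    rw [← hqp]
    module
  have hDS : b • (C - {p}) + {x} ⊆ S := fun y hy ↦ by
    obtain ⟨c, hc, rfl⟩ := hhomothety y hy
    exact hφ.1 hq (hCS hc) ha.le hb.le hab
  have hbound : ∀ y ∈ b • (C - {p}) + {x}, φ y ≤ a * φ q + b * M := fun y hy ↦ by
    obtain ⟨c, hc, rfl⟩ := hhomothety y hy
    have := hφ.2 hq (hCS hc) ha.le hb.le hab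
    simp only [smul_eq_mul] at this
    linarith [mul_le_mul_of_nonneg_left (hM c hc) hb.le]
  refine ⟨b / 2, half_pos hb, max (4 * (a * φ q + b * M - φ x) / b) 1,
    lt_max_of_lt_right one_pos, ?_, fun u hu v hv ↦ ?_⟩
  · exact (hD.half_smul_add_singleton_subset ⟨p, hp, p, rfl, sub_self p⟩ b x).trans hDS
  · exact (hφ.abs_sub_le_mul_gauge hD hDneg hb hDS hbound hu hv).trans
      (mul_le_mul_of_nonneg_right (le_max_left _ _) (gauge_nonneg _))

theorem stmt_6 (S : Set X) (hS : Convex ℝ S) (hicr : (icr S).Nonempty)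
    (φ : X → ℝ) (hφ : ConvexOn ℝ S φ)
    (C : Set X) (hCS : C ⊆ S) (hC : Convex ℝ C) (p : X) (hp : p ∈ C)
    (hsym : C - {p} = -(C - {p}))
    (hbdd : ∃ M : ℝ, ∀ x ∈ C, φ x ≤ M) :
    ∀ x ∈ icr S, ∃ ε : ℝ, 0 < ε ∧ ∃ L : ℝ, 0 < L ∧
      ε • (C - {p}) + {x} ⊆ S ∧
      ∀ u ∈ ε • (C - {p}) + {x}, ∀ v ∈ ε • (C - {p}) + {x},
        |φ u - φ v| ≤ L * gauge (C - {p}) (u - v) :=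
  stmt_6_general S φ hφ C hCS hC p hp hsym hbdd
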